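/- arXiv:2406.01323 — 7 statements merged into one kernel-verified Lean document; each statement's English description precedes it below -/
import Mathlib

section
/- Let c ≥ 0, k ≥ 0, and let μ_A and μ_D be atomless Borel probability measures on [0,1] such that μ_A dominates μ_D over [0,1], i.e. μ_A([0,x]) ≤ μ_D([0,x]) for all x ∈ [0,1]. Then there exists an optimal decision threshold β̂ ∈ [0,1] that simultaneously maximizes the post-update means of both groups, i.e. for every β ∈ [0,1] one has ∫ f_{β̂} dμ_A ≥ ∫ f_β dμ_A and ∫ f_{β̂} dμ_D ≥ ∫ f_β dμ_D, and moreover at this threshold the advantaged group retains at least the mean of the disadvantaged group: ∫ f_{β̂} dμ_A ≥ ∫ f_{β̂} dμ_D. -/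
open MeasureTheory Set

/-- Expected one-step updated repayment probability of an approved individual
with current repayment probability `x`. -/
noncomputable def g (c k x : ℝ) : ℝ :=
  x * max (min (x + k) 1) 0 + (1 - x) * max (min (x - c * k) 1) 0

/-- One-step update under a threshold-`β` loan policy. -/
noncomputable def f (c k β x : ℝ) : ℝ :=
  if x < β then x else g c k x

noncomputable def bhat (c k : ℝ) : ℝ := max 0 (min (1 - k) (c / (1 + c)))

section aux
variable {c k x y : ℝ}

lemma bhat_mem (hc : 0 ≤ c) : bhat c k ∈ Icc (0:ℝ) 1 := by
  constructor
  · exact le_max_left _ _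
  · apply max_le zero_le_one
    apply min_le_of_right_le
    rw [div_le_one (by linarith)]
    linarith

lemma g_eq (hc : 0 ≤ c) (hk : 0 ≤ k) (hx : x ∈ Icc (0:ℝ) 1) :
    g c k x = x * min (x + k) 1 + (1 - x) * max (x - c * k) 0 := by
  obtain ⟨h0, h1⟩ := hx
  have hck : 0 ≤ c * k := mul_nonneg hc hk
  unfold g
  rw [show max (min (x + k) 1) 0 = min (x + k) 1 from
      max_eq_left (le_min (by linarith) zero_le_one),
    show min (x - c * k) 1 = x - c * k from min_eq_left (by linarith)]

lemma g_mem (hc : 0 ≤ c) (hk : 0 ≤ k) (hx : x ∈ Icc (0:ℝ) 1) :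
    g c k x ∈ Icc (0:ℝ) 1 := by
  obtain ⟨h0, h1⟩ := hx
  unfold g
  have a0 : (0:ℝ) ≤ max (min (x + k) 1) 0 := le_max_right _ _
  have a1 : max (min (x + k) 1) 0 ≤ 1 := max_le (min_le_right _ _) zero_le_one
  have b0 : (0:ℝ) ≤ max (min (x - c * k) 1) 0 := le_max_right _ _
  have b1 : max (min (x - c * k) 1) 0 ≤ 1 := max_le (min_le_right _ _) zero_le_one
  constructor
  · nlinarith
  · nlinarith

lemma le_g (hc : 0 ≤ c) (hk : 0 ≤ k) (hx : x ∈ Icc (0:ℝ) 1)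
    (h : bhat c k ≤ x) : x ≤ g c k x := by
  obtain ⟨h0, h1⟩ := hx
  rw [g_eq hc hk ⟨h0, h1⟩]
  rcases le_or_gt (1 - k) x with h2 | h2
  · rw [min_eq_right (by linarith)]
    have : (0:ℝ) ≤ max (x - c * k) 0 := le_max_right _ _
    nlinarith
  · rw [min_eq_left (by linarith)]
    have hm : c / (1 + c) ≤ x := by
      rcases min_le_iff.mp (le_trans (le_max_right _ _) h) with h3 | h3
      · linarith
      · exact h3
    have hcx : c * (1 - x) ≤ x := by
      rw [div_le_iff₀ (by linarith)] at hm
      nlinarith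
    have hmax : x - c * k ≤ max (x - c * k) 0 := le_max_left _ _
    nlinarith

lemma g_le (hc : 0 ≤ c) (hk : 0 ≤ k) (hx : x ∈ Icc (0:ℝ) 1)
    (h : x < bhat c k) : g c k x ≤ x := by
  obtain ⟨h0, h1⟩ := hx
  unfold bhat at h
  have hmin : x < min (1 - k) (c / (1 + c)) := by
    rcases max_cases (0:ℝ) (min (1 - k) (c / (1 + c))) with ⟨he, _⟩ | ⟨he, _⟩
    · rw [he] at h; linarith
    · rwa [he] at h
  have hk1 : x < 1 - k := lt_of_lt_of_le hmin (min_le_left _ _)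
  have hm : x < c / (1 + c) := lt_of_lt_of_le hmin (min_le_right _ _)
  have hcx : x ≤ c * (1 - x) := by
    rw [lt_div_iff₀ (by linarith)] at hm
    nlinarith
  rw [g_eq hc hk ⟨h0, h1⟩, min_eq_left (by linarith)]
  rcases le_or_gt (x - c * k) 0 with h3 | h3
  · rw [max_eq_right h3]; nlinarith
  · rw [max_eq_left h3.le]; nlinarith

lemma g_mono (hc : 0 ≤ c) (hk : 0 ≤ k) (hx : x ∈ Icc (0:ℝ) 1)
    (hy : y ∈ Icc (0:ℝ) 1) (hxy : x ≤ y) : g c k x ≤ g c k y := by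
  obtain ⟨hx0, hx1⟩ := hx
  obtain ⟨hy0, hy1⟩ := hy
  rw [g_eq hc hk ⟨hx0, hx1⟩, g_eq hc hk ⟨hy0, hy1⟩]
  have hax : min (x + k) 1 ≤ min (y + k) 1 := min_le_min (by linarith) le_rfl
  have hbx : max (x - c * k) 0 ≤ max (y - c * k) 0 := max_le_max (by linarith) le_rfl
  have hay : y ≤ min (y + k) 1 := le_min (by linarith) hy1
  have hbxx : max (x - c * k) 0 ≤ x := max_le (by nlinarith [mul_nonneg hc hk]) hx0
  nlinarith [mul_nonneg (sub_nonneg.mpr hxy) (sub_nonneg.mpr (le_trans hbxx (le_trans hxy hay))),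
    mul_nonneg hx0 (sub_nonneg.mpr hax), mul_nonneg (sub_nonneg.mpr hy1) (sub_nonneg.mpr hbx)]

lemma f_bhat_eq (hc : 0 ≤ c) (hk : 0 ≤ k) (hx : x ∈ Icc (0:ℝ) 1) :
    f c k (bhat c k) x = max x (g c k x) := by
  unfold f
  split_ifs with h
  · exact (max_eq_left (g_le hc hk hx h)).symm
  · exact (max_eq_right (le_g hc hk hx (not_lt.mp h))).symm

lemma g_cont : Continuous (g c k) := by
  unfold g; fun_prop

lemma f_meas (β : ℝ) : Measurable (f c k β) := by
  unfold f
  have hs : MeasurableSet {x : ℝ | x < β} := measurableSet_Iio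
  exact Measurable.ite hs measurable_id g_cont.measurable

end aux

section fosd
variable {φ : ℝ → ℝ} {t : ℝ}

lemma sSup_mem_Icc (hmono : Monotone φ) (hφ0 : φ 0 = 0) (hφ1 : φ 1 = 1)
    (ht : 0 < t) (ht1 : t < 1) : sSup {x | φ x ≤ t} ∈ Icc (0:ℝ) 1 := by
  have h0S : (0:ℝ) ∈ {x | φ x ≤ t} := by simp [hφ0, ht.le]
  have hub : ∀ x ∈ {x | φ x ≤ t}, x ≤ 1 := by
    intro x hx
    by_contra hx1
    push_neg at hx1
    have h2 := hmono hx1.le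
    rw [hφ1] at h2
    exact absurd (le_trans h2 hx) (not_le.mpr ht1)
  exact ⟨le_csSup ⟨1, hub⟩ h0S, csSup_le ⟨0, h0S⟩ hub⟩

lemma meas_lt_eq (hmono : Monotone φ) (hφ0 : φ 0 = 0) (hφ1 : φ 1 = 1)
    (μ : Measure ℝ) [IsProbabilityMeasure μ] [NullSingletonClass μ] (hμ1 : μ (Icc (0:ℝ) 1) = 1)
    (ht : 0 < t) (ht1 : t < 1) :
    μ {a | t < φ a} = 1 - μ (Icc 0 (sSup {x | φ x ≤ t})) := by
  set S := {x : ℝ | φ x ≤ t} with hSdef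
  have h0S : (0:ℝ) ∈ S := by simp [hSdef, hφ0, ht.le]
  have hub : ∀ x ∈ S, x ≤ 1 := by
    intro x hx
    by_contra hx1
    push_neg at hx1
    have h2 := hmono hx1.le
    rw [hφ1] at h2
    exact absurd (le_trans h2 hx) (not_le.mpr ht1)
  have hbdd : BddAbove S := ⟨1, hub⟩
  set s := sSup S with hsdef
  have hs0 : 0 ≤ s := le_csSup hbdd h0S
  have hsub1 : Iio s ⊆ S := by
    intro x hx
    obtain ⟨y, hyS, hxy⟩ := exists_lt_of_lt_csSup ⟨0, h0S⟩ hx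
    exact le_trans (hmono hxy.le) hyS
  have hsub2 : S ⊆ Iic s := fun x hx => le_csSup hbdd hx
  have hcompl0 : μ (Icc (0:ℝ) 1)ᶜ = 0 := by
    rw [measure_compl measurableSet_Icc (measure_ne_top _ _), hμ1, measure_univ, tsub_self]
  have hnull : μ (Iio 0) = 0 := by
    refine measure_mono_null ?_ hcompl0
    intro x hx hx2
    exact absurd hx2.1 (not_le.mpr hx)
  have hIic : μ (Iic s) = μ (Icc 0 s) := by
    have hu : Iic s = Iio 0 ∪ Icc 0 s := by
      ext x
      simp only [mem_Iic, mem_union, mem_Iio, mem_Icc]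
      constructor
      · intro h
        rcases lt_or_ge x 0 with h' | h'
        · exact Or.inl h'
        · exact Or.inr ⟨h', h⟩
      · rintro (h | ⟨_, h⟩)
        · linarith
        · exact h
    rw [hu]
    refine le_antisymm ?_ (measure_mono subset_union_right)
    calc μ (Iio 0 ∪ Icc 0 s) ≤ μ (Iio 0) + μ (Icc 0 s) := measure_union_le _ _
    _ = μ (Icc 0 s) := by rw [hnull, zero_add]
  have hSmeas : MeasurableSet S := hmono.measurable measurableSet_Iic
  have hμS : μ S = μ (Icc 0 s) := by
    refine le_antisymm ?_ ?_
    · rw [← hIic]; exact measure_mono hsub2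
    · have h3 : μ (Iio s) = μ (Iic s) := measure_congr Iio_ae_eq_Iic
      rw [← hIic, ← h3]
      exact measure_mono hsub1
  have hset : {a | t < φ a} = Sᶜ := by
    ext x
    simp [hSdef, not_le]
  rw [hset, measure_compl hSmeas (measure_ne_top _ _), measure_univ, hμS]

lemma fosd (hmono : Monotone φ) (h0 : ∀ x, 0 ≤ φ x) (h1 : ∀ x, φ x ≤ 1)
    (hφ0 : φ 0 = 0) (hφ1 : φ 1 = 1)
    (μA μD : Measure ℝ) [IsProbabilityMeasure μA] [IsProbabilityMeasure μD]
    [NullSingletonClass μA] [NullSingletonClass μD]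
    (hA1 : μA (Icc (0:ℝ) 1) = 1) (hD1 : μD (Icc (0:ℝ) 1) = 1)
    (hdom : ∀ x ∈ Icc (0:ℝ) 1, μA (Icc 0 x) ≤ μD (Icc 0 x)) :
    (∫ x, φ x ∂μD) ≤ ∫ x, φ x ∂μA := by
  have hφmeas : Measurable φ := hmono.measurable
  have key : ∀ t, 0 < t → μD {a | t < φ a} ≤ μA {a | t < φ a} := by
    intro t ht
    rcases le_or_gt 1 t with ht1 | ht1
    · have he : {a | t < φ a} = ∅ := by
        ext x
        simp only [mem_setOf_eq, mem_empty_iff_false, iff_false, not_lt]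
        exact le_trans (h1 x) ht1
      simp [he]
    · rw [meas_lt_eq hmono hφ0 hφ1 μA hA1 ht ht1,
          meas_lt_eq hmono hφ0 hφ1 μD hD1 ht ht1]
      exact tsub_le_tsub_left (hdom _ (sSup_mem_Icc hmono hφ0 hφ1 ht ht1)) 1
  have hlayA := lintegral_eq_lintegral_meas_lt μA (Filter.Eventually.of_forall h0) hφmeas.aemeasurable
  have hlayD := lintegral_eq_lintegral_meas_lt μD (Filter.Eventually.of_forall h0) hφmeas.aemeasurable
  have hle : ∫⁻ x, ENNReal.ofReal (φ x) ∂μD ≤ ∫⁻ x, ENNReal.ofReal (φ x) ∂μA := by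
    rw [hlayA, hlayD]
    refine lintegral_mono_ae ((ae_restrict_iff' measurableSet_Ioi).mpr ?_)
    exact Filter.Eventually.of_forall fun t ht => key t ht
  have hfin : ∫⁻ x, ENNReal.ofReal (φ x) ∂μA ≠ ⊤ := by
    have hb : ∫⁻ x, ENNReal.ofReal (φ x) ∂μA ≤ ∫⁻ _, 1 ∂μA :=
      lintegral_mono fun x => ENNReal.ofReal_le_one.mpr (h1 x)
    rw [lintegral_one, measure_univ] at hb
    exact ne_top_of_le_ne_top ENNReal.one_ne_top hb
  rw [integral_eq_lintegral_of_nonneg_ae (Filter.Eventually.of_forall h0) hφmeas.aestronglyMeasurable,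
      integral_eq_lintegral_of_nonneg_ae (Filter.Eventually.of_forall h0) hφmeas.aestronglyMeasurable]
  exact ENNReal.toReal_mono hfin hle

end fosd

section phi
variable {c k : ℝ}

/-- Monotone extension of `f c k (bhat c k)` to all of `ℝ`. -/
noncomputable def phi (c k x : ℝ) : ℝ :=
  if x ≤ 0 then 0 else if 1 ≤ x then 1 else max x (g c k x)

lemma phi_nonneg (hc : 0 ≤ c) (hk : 0 ≤ k) (x : ℝ) : 0 ≤ phi c k x := by
  unfold phi
  split_ifs with h1 h2
  · exact le_rfl
  · exact zero_le_one
  · exact le_trans (not_le.mp h1).le (le_max_left _ _)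

lemma phi_le_one (hc : 0 ≤ c) (hk : 0 ≤ k) (x : ℝ) : phi c k x ≤ 1 := by
  unfold phi
  split_ifs with h1 h2
  · exact zero_le_one
  · exact le_rfl
  · push_neg at h1 h2
    exact max_le h2.le (g_mem hc hk ⟨h1.le, h2.le⟩).2

lemma phi_mono (hc : 0 ≤ c) (hk : 0 ≤ k) : Monotone (phi c k) := by
  intro x y hxy
  rcases le_or_gt x 0 with hx0 | hx0
  · rw [show phi c k x = 0 by rw [phi, if_pos hx0]]
    exact phi_nonneg hc hk y
  rcases le_or_gt 1 y with hy1 | hy1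
  · rw [show phi c k y = 1 by
      rw [phi, if_neg (lt_of_lt_of_le hx0 hxy).not_ge, if_pos hy1]]
    exact phi_le_one hc hk x
  have hx1 : x < 1 := lt_of_le_of_lt hxy hy1
  have hy0 : 0 < y := lt_of_lt_of_le hx0 hxy
  rw [show phi c k x = max x (g c k x) by rw [phi, if_neg hx0.not_ge, if_neg hx1.not_ge],
      show phi c k y = max y (g c k y) by rw [phi, if_neg hy0.not_ge, if_neg hy1.not_ge]]
  exact max_le_max hxy (g_mono hc hk ⟨hx0.le, hx1.le⟩ ⟨hy0.le, hy1.le⟩ hxy)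

lemma phi_zero : phi c k 0 = 0 := by simp [phi]

lemma phi_one : phi c k 1 = 1 := by norm_num [phi]

lemma ae_Icc (μ : Measure ℝ) [IsProbabilityMeasure μ] (hμ1 : μ (Icc (0:ℝ) 1) = 1) :
    ∀ᵐ x ∂μ, x ∈ Icc (0:ℝ) 1 := by
  rw [ae_iff]
  have he : {x : ℝ | ¬ x ∈ Icc (0:ℝ) 1} = (Icc (0:ℝ) 1)ᶜ := rfl
  rw [he, measure_compl measurableSet_Icc (measure_ne_top _ _), hμ1, measure_univ, tsub_self]

lemma ae_Ioo (μ : Measure ℝ) [IsProbabilityMeasure μ] [NullSingletonClass μ]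
    (hμ1 : μ (Icc (0:ℝ) 1) = 1) : ∀ᵐ x ∂μ, x ∈ Ioo (0:ℝ) 1 := by
  have h1 : μ (Ioo (0:ℝ) 1) = 1 := by
    rw [measure_congr (Ioo_ae_eq_Icc (μ := μ) (a := (0:ℝ)) (b := 1)), hμ1]
  rw [ae_iff]
  have he : {x : ℝ | ¬ x ∈ Ioo (0:ℝ) 1} = (Ioo (0:ℝ) 1)ᶜ := rfl
  rw [he, measure_compl measurableSet_Ioo (measure_ne_top _ _), h1, measure_univ, tsub_self]

lemma f_int (hc : 0 ≤ c) (hk : 0 ≤ k) (β : ℝ) (μ : Measure ℝ) [IsProbabilityMeasure μ]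
    (hμ1 : μ (Icc (0:ℝ) 1) = 1) : Integrable (f c k β) μ := by
  refine Integrable.mono' (integrable_const (1:ℝ)) (f_meas β).aestronglyMeasurable ?_
  filter_upwards [ae_Icc μ hμ1] with x hx
  have hfx : f c k β x ∈ Icc (0:ℝ) 1 := by
    unfold f
    split_ifs
    · exact hx
    · exact g_mem hc hk hx
  rw [Real.norm_eq_abs, abs_le]
  exact ⟨by linarith [hfx.1], hfx.2⟩

lemma part1 (hc : 0 ≤ c) (hk : 0 ≤ k) (β : ℝ) (μ : Measure ℝ) [IsProbabilityMeasure μ]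
    (hμ1 : μ (Icc (0:ℝ) 1) = 1) :
    (∫ x, f c k β x ∂μ) ≤ ∫ x, f c k (bhat c k) x ∂μ := by
  refine integral_mono_ae (f_int hc hk β μ hμ1) (f_int hc hk _ μ hμ1) ?_
  filter_upwards [ae_Icc μ hμ1] with x hx
  rw [f_bhat_eq hc hk hx]
  unfold f
  split_ifs
  · exact le_max_left _ _
  · exact le_max_right _ _

lemma int_f_eq_phi (hc : 0 ≤ c) (hk : 0 ≤ k) (μ : Measure ℝ) [IsProbabilityMeasure μ]
    [NullSingletonClass μ] (hμ1 : μ (Icc (0:ℝ) 1) = 1) :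
    (∫ x, f c k (bhat c k) x ∂μ) = ∫ x, phi c k x ∂μ := by
  refine integral_congr_ae ?_
  filter_upwards [ae_Ioo μ hμ1] with x hx
  rw [f_bhat_eq hc hk ⟨hx.1.le, hx.2.le⟩]
  unfold phi
  rw [if_neg (not_le.mpr hx.1), if_neg (not_le.mpr hx.2)]

end phi

theorem stmt_2 (c k : ℝ) (hc : 0 ≤ c) (hk : 0 ≤ k)
    (μA μD : Measure ℝ) [IsProbabilityMeasure μA] [IsProbabilityMeasure μD]
    [NullSingletonClass μA] [NullSingletonClass μD]
    (hA1 : μA (Icc (0:ℝ) 1) = 1) (hD1 : μD (Icc (0:ℝ) 1) = 1)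
    (hdom : ∀ x ∈ Icc (0:ℝ) 1, μA (Icc 0 x) ≤ μD (Icc 0 x)) :
    ∃ βhat ∈ Icc (0:ℝ) 1,
      (∀ β ∈ Icc (0:ℝ) 1,
        (∫ x, f c k β x ∂μA) ≤ (∫ x, f c k βhat x ∂μA) ∧
        (∫ x, f c k β x ∂μD) ≤ (∫ x, f c k βhat x ∂μD)) ∧
      (∫ x, f c k βhat x ∂μD) ≤ (∫ x, f c k βhat x ∂μA) := by
  refine ⟨bhat c k, bhat_mem hc, fun β _ => ⟨part1 hc hk β μA hA1, part1 hc hk β μD hD1⟩, ?_⟩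
  rw [int_f_eq_phi hc hk μA hA1, int_f_eq_phi hc hk μD hD1]
  exact fosd (phi_mono hc hk) (phi_nonneg hc hk) (phi_le_one hc hk) phi_zero phi_one
    μA μD hA1 hD1 hdom
end

section
/- For all real parameters c ≥ 0 and k ≥ 0, the set {x ∈ (0,1) : g(x) > x} is either empty or equal to an open interval of the form (x₀, 1) for some x₀ ∈ [0,1). Equivalently, either g(x) ≤ x for all x ∈ (0,1), or there exists a minimal x₀ such that g(x) > x for all x with x₀ < x < 1. -/
open Set

lemma g_eval (c k x : ℝ) (hc : 0 ≤ c) (hk : 0 ≤ k) (hx0 : 0 < x) (hx1 : x < 1) :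
    g c k x = x * min (x + k) 1 + (1 - x) * max (x - c * k) 0 := by
  have h1 : min (x - c * k) 1 = x - c * k := by
    apply min_eq_left; nlinarith [mul_nonneg hc hk]
  have h2 : max (min (x + k) 1) 0 = min (x + k) 1 := by
    apply max_eq_left
    rcases le_total (x + k) 1 with h | h
    · rw [min_eq_left h]; linarith
    · rw [min_eq_right h]; norm_num
  rw [g, h1, h2]

lemma key (c k x : ℝ) (hc : 0 ≤ c) (hk : 0 < k) (hck : c * k < 1)
    (hx0 : 0 < x) (hx1 : x < 1) :
    x < g c k x ↔ max (c / (1 + c)) (c * k) < x := by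
  have h1c : (0:ℝ) < 1 + c := by linarith
  have hdiv : c / (1 + c) < x ↔ c < x * (1 + c) := div_lt_iff₀ h1c
  rw [g_eval c k x hc hk.le hx0 hx1, max_lt_iff, hdiv]
  rcases le_or_gt x (c * k) with hA | hA
  · -- x ≤ ck : g ≤ x, and ¬ (ck < x)
    have hmax : max (x - c * k) 0 = 0 := max_eq_right (by linarith)
    rw [hmax]
    constructor
    · intro h
      exfalso
      have hmin : min (x + k) 1 ≤ 1 := min_le_right _ _
      nlinarith
    · rintro ⟨_, h2⟩; linarith
  · have hmax : max (x - c * k) 0 = x - c * k := max_eq_left (by linarith)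
    rw [hmax]
    rcases le_total (x + k) 1 with hB | hB
    · rw [min_eq_left hB]
      constructor
      · intro h
        refine ⟨?_, hA⟩
        nlinarith
      · rintro ⟨h1, _⟩
        nlinarith
    · rw [min_eq_right hB]
      constructor
      · intro _
        refine ⟨?_, hA⟩
        rcases le_or_gt (c * k) (c / (1 + c)) with h | h
        · rw [le_div_iff₀ h1c] at h
          nlinarith
        · rw [div_lt_iff₀ h1c] at h
          nlinarith
      · rintro ⟨_, h2⟩
        nlinarith

theorem stmt_5 (c k : ℝ) (hc : 0 ≤ c) (hk : 0 ≤ k) :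
    {x ∈ Ioo (0:ℝ) 1 | x < g c k x} = ∅ ∨
      ∃ x₀ ∈ Ico (0:ℝ) 1, {x ∈ Ioo (0:ℝ) 1 | x < g c k x} = Ioo x₀ 1 := by
  rcases eq_or_lt_of_le hk with hk0 | hk0
  · -- k = 0 : g x = x on (0,1)
    left
    ext x
    simp only [mem_sep_iff, mem_Ioo, mem_empty_iff_false, iff_false]
    rintro ⟨⟨hx0, hx1⟩, hg⟩
    rw [g_eval c k x hc hk hx0 hx1, ← hk0] at hg
    have h1 : min (x + 0) 1 = x := by rw [add_zero]; exact min_eq_left hx1.le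
    have h2 : max (x - c * 0) 0 = x := by rw [mul_zero, sub_zero]; exact max_eq_left hx0.le
    rw [h1, h2] at hg
    nlinarith
  rcases le_or_gt 1 (c * k) with hck | hck
  · -- ck ≥ 1 : empty
    left
    ext x
    simp only [mem_sep_iff, mem_Ioo, mem_empty_iff_false, iff_false]
    rintro ⟨⟨hx0, hx1⟩, hg⟩
    rw [g_eval c k x hc hk hx0 hx1] at hg
    have hmax : max (x - c * k) 0 = 0 := max_eq_right (by linarith)
    have hmin : min (x + k) 1 ≤ 1 := min_le_right _ _
    rw [hmax] at hg
    nlinarith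
  · right
    have h1c : (0:ℝ) < 1 + c := by linarith
    refine ⟨max (c / (1 + c)) (c * k), ⟨le_max_of_le_right (mul_nonneg hc hk), ?_⟩, ?_⟩
    · apply max_lt
      · rw [div_lt_iff₀ h1c]; linarith
      · exact hck
    · ext x
      simp only [mem_sep_iff, mem_Ioo]
      constructor
      · rintro ⟨⟨hx0, hx1⟩, hg⟩
        exact ⟨(key c k x hc hk0 hck hx0 hx1).mp hg, hx1⟩
      · rintro ⟨hx0, hx1⟩
        have hx0' : 0 < x := lt_of_le_of_lt (le_max_of_le_right (mul_nonneg hc hk)) hx0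
        exact ⟨⟨hx0', hx1⟩, (key c k x hc hk0 hck hx0' hx1).mpr hx0⟩
end

section
/- Let β ∈ [0,1] and let μ_A and μ_D be atomless Borel probability measures on [0,1] such that μ_A([0,x]) ≤ μ_D([0,x]) for all x ∈ [β,1]. Then the truncated means above the threshold satisfy ∫ x·1_{[β,1]}(x) dμ_A ≥ ∫ x·1_{[β,1]}(x) dμ_D. -/
open MeasureTheory Set

lemma meas_level_set (β : ℝ) (hβ : β ∈ Icc (0:ℝ) 1) (μ : Measure ℝ)
    [IsProbabilityMeasure μ] [NullSingletonClass μ] (h1 : μ (Icc (0:ℝ) 1) = 1)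
    {t : ℝ} (ht0 : 0 < t) (ht1 : t < 1) :
    μ {a | t < a * (Icc β 1).indicator (fun _ => (1:ℝ)) a}
      = 1 - μ (Icc 0 (max β t)) := by
  set c := max β t with hc
  have hS : {a | t < a * (Icc β 1).indicator (fun _ => (1:ℝ)) a} = Icc β 1 ∩ Ioi t := by
    ext a
    simp only [mem_setOf_eq, mem_inter_iff, mem_Ioi]
    by_cases h : a ∈ Icc β 1
    · simp [indicator_of_mem h, h]
    · simp [indicator_of_notMem h, h, not_lt.2 ht0.le]
  have hmeas : μ (Icc β 1 ∩ Ioi t) = μ (Ioc c 1) := by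
    apply le_antisymm
    · have hsub : Icc β 1 ∩ Ioi t ⊆ Ioc c 1 ∪ {β} := by
        rintro a ⟨⟨h1a, h2a⟩, h3a⟩
        rcases eq_or_lt_of_le h1a with h | h
        · exact Or.inr (by simp [h.symm])
        · exact Or.inl ⟨max_lt h h3a, h2a⟩
      calc μ (Icc β 1 ∩ Ioi t) ≤ μ (Ioc c 1 ∪ {β}) := measure_mono hsub
        _ ≤ μ (Ioc c 1) + μ {β} := measure_union_le _ _
        _ = μ (Ioc c 1) := by simp [measure_singleton]
    · apply measure_mono
      rintro a ⟨h1a, h2a⟩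
      exact ⟨⟨(le_max_left β t).trans h1a.le, h2a⟩, lt_of_le_of_lt (le_max_right β t) h1a⟩
  have hc0 : (0:ℝ) ≤ c := le_trans hβ.1 (le_max_left β t)
  have hc1 : c ≤ 1 := max_le hβ.2 ht1.le
  have hsplit : μ (Icc 0 c) + μ (Ioc c 1) = 1 := by
    rw [← measure_union (by
        simp only [Set.disjoint_left]
        rintro a ⟨_, ha2⟩ ⟨ha3, _⟩
        exact absurd ha2 (not_le.2 ha3)) measurableSet_Ioc,
      Icc_union_Ioc_eq_Icc hc0 hc1, h1]
  rw [hS, hmeas]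
  have hfin : μ (Icc 0 c) ≠ ⊤ := measure_ne_top μ _
  exact ENNReal.eq_sub_of_add_eq hfin (by rw [add_comm]; exact hsplit)

lemma lint_eq (β : ℝ) (hβ : β ∈ Icc (0:ℝ) 1) (μ : Measure ℝ)
    [IsProbabilityMeasure μ] [NullSingletonClass μ] (h1 : μ (Icc (0:ℝ) 1) = 1) :
    ∫⁻ x, ENNReal.ofReal (x * (Icc β 1).indicator (fun _ => (1:ℝ)) x) ∂μ
      = ∫⁻ t in Ioi (0:ℝ), μ {a | t < a * (Icc β 1).indicator (fun _ => (1:ℝ)) a} := by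
  apply lintegral_eq_lintegral_meas_lt μ
  · filter_upwards with x
    by_cases h : x ∈ Icc β 1
    · simp only [indicator_of_mem h, mul_one]; exact le_trans hβ.1 h.1
    · simp [indicator_of_notMem h]
  · exact (measurable_id.mul ((measurable_const).indicator measurableSet_Icc)).aemeasurable

theorem stmt_6 (β : ℝ) (hβ : β ∈ Icc (0:ℝ) 1)
    (μA μD : Measure ℝ) [IsProbabilityMeasure μA] [IsProbabilityMeasure μD]
    [NullSingletonClass μA] [NullSingletonClass μD]
    (hA1 : μA (Icc (0:ℝ) 1) = 1) (hD1 : μD (Icc (0:ℝ) 1) = 1)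
    (hdom : ∀ x ∈ Icc β 1, μA (Icc 0 x) ≤ μD (Icc 0 x)) :
    (∫ x, x * (Icc β 1).indicator (fun _ => (1:ℝ)) x ∂μD) ≤
      ∫ x, x * (Icc β 1).indicator (fun _ => (1:ℝ)) x ∂μA := by
  set f : ℝ → ℝ := fun x => x * (Icc β 1).indicator (fun _ => (1:ℝ)) x with hf
  have hfnn : ∀ x, 0 ≤ f x := by
    intro x
    by_cases h : x ∈ Icc β 1
    · simp only [hf, indicator_of_mem h, mul_one]; exact le_trans hβ.1 h.1
    · simp [hf, indicator_of_notMem h]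
  have hfle : ∀ x, f x ≤ 1 := by
    intro x
    by_cases h : x ∈ Icc β 1
    · simp only [hf, indicator_of_mem h, mul_one]; exact h.2
    · simp [hf, indicator_of_notMem h]
  have hfm : Measurable f :=
    measurable_id.mul ((measurable_const).indicator measurableSet_Icc)
  have key : ∀ (t : ℝ), t ∈ Ioi (0:ℝ) →
      μD {a | t < f a} ≤ μA {a | t < f a} := by
    intro t ht
    rcases lt_or_ge t 1 with h1t | h1t
    · rw [meas_level_set β hβ μA hA1 ht h1t, meas_level_set β hβ μD hD1 ht h1t]
      apply tsub_le_tsub_left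
      exact hdom (max β t) ⟨le_max_left β t, max_le hβ.2 h1t.le⟩
    · have : {a | t < f a} = ∅ := by
        ext a
        simp only [mem_setOf_eq, mem_empty_iff_false, iff_false, not_lt]
        exact le_trans (hfle a) h1t
      simp [this]
  have hlint : ∫⁻ x, ENNReal.ofReal (f x) ∂μD ≤ ∫⁻ x, ENNReal.ofReal (f x) ∂μA := by
    rw [lint_eq β hβ μD hD1, lint_eq β hβ μA hA1]
    exact setLIntegral_mono' measurableSet_Ioi key
  have hDeq : (∫ x, f x ∂μD) = (∫⁻ x, ENNReal.ofReal (f x) ∂μD).toReal :=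
    integral_eq_lintegral_of_nonneg_ae (ae_of_all _ hfnn) hfm.aestronglyMeasurable
  have hAeq : (∫ x, f x ∂μA) = (∫⁻ x, ENNReal.ofReal (f x) ∂μA).toReal :=
    integral_eq_lintegral_of_nonneg_ae (ae_of_all _ hfnn) hfm.aestronglyMeasurable
  have hfinA : (∫⁻ x, ENNReal.ofReal (f x) ∂μA) ≠ ⊤ := by
    have : (∫⁻ x, ENNReal.ofReal (f x) ∂μA) ≤ ∫⁻ _, 1 ∂μA :=
      lintegral_mono fun x => by
        simpa using ENNReal.ofReal_le_ofReal (hfle x)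
    refine ne_top_of_le_ne_top ?_ this
    simp
  calc (∫ x, f x ∂μD) = (∫⁻ x, ENNReal.ofReal (f x) ∂μD).toReal := hDeq
    _ ≤ (∫⁻ x, ENNReal.ofReal (f x) ∂μA).toReal := ENNReal.toReal_mono hfinA hlint
    _ = ∫ x, f x ∂μA := hAeq.symm
end

section
/- Let c ≥ 0, k ≥ 0, and let μ be an atomless Borel probability measure on [0,1]. Then the map β ↦ ∫ f_β dμ is continuous on [0,1]; in particular, by the extreme value theorem, there exists β̂ ∈ [0,1] attaining the maximum value of ∫ f_β dμ over β ∈ [0,1]. -/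
open MeasureTheory Set

lemma g_continuous (c k : ℝ) : Continuous (g c k) := by
  unfold g; fun_prop

lemma integrable_bound (c k : ℝ) (μ : Measure ℝ) [IsProbabilityMeasure μ]
    (h1 : μ (Icc (0:ℝ) 1) = 1) :
    Integrable (fun x => |x| + |g c k x|) μ := by
  have hcompl : μ ((Icc (0:ℝ) 1)ᶜ) = 0 := by
    rw [measure_compl measurableSet_Icc (by simp), h1]
    simp
  have hcont : Continuous (fun x => |x| + |g c k x|) :=
    (continuous_abs).add ((g_continuous c k).abs)
  have hIcc : IntegrableOn (fun x => |x| + |g c k x|) (Icc (0:ℝ) 1) μ :=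
    hcont.continuousOn.integrableOn_Icc
  have hcomplInt : IntegrableOn (fun x => |x| + |g c k x|) ((Icc (0:ℝ) 1)ᶜ) μ := by
    rw [IntegrableOn, Measure.restrict_eq_zero.mpr hcompl]
    exact integrable_zero_measure
  have := hIcc.union hcomplInt
  rwa [Set.union_compl_self, integrableOn_univ] at this

lemma continuous_integral_f (c k : ℝ) (μ : Measure ℝ) [IsProbabilityMeasure μ]
    [NullSingletonClass μ] (h1 : μ (Icc (0:ℝ) 1) = 1) :
    Continuous (fun β => ∫ x, f c k β x ∂μ) := by
  rw [continuous_iff_continuousAt]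
  intro β₀
  apply continuousAt_of_dominated (bound := fun x => |x| + |g c k x|)
  · filter_upwards with β
    have : Measurable (f c k β) := by
      unfold f
      exact Measurable.ite measurableSet_Iio measurable_id (g_continuous c k).measurable
    exact this.aestronglyMeasurable
  · filter_upwards with β
    filter_upwards with x
    unfold f
    rw [Real.norm_eq_abs]
    have h1 : (0:ℝ) ≤ |x| := abs_nonneg x
    have h2 : (0:ℝ) ≤ |g c k x| := abs_nonneg _
    split_ifs
    · linarith
    · linarith
  · exact integrable_bound c k μ h1
  · have hsing : μ {β₀} = 0 := measure_singleton β₀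
    filter_upwards [measure_eq_zero_iff_ae_notMem.mp hsing] with x hx
    have hx' : x ≠ β₀ := by simpa using hx
    rcases lt_or_gt_of_ne hx' with h | h
    · have : ∀ᶠ β in nhds β₀, f c k β x = x := by
        filter_upwards [eventually_gt_nhds h] with β hβ
        simp [f, hβ]
      exact Filter.Tendsto.congr' (this.mono fun β hβ => hβ.symm)
        (by simpa [f, h] using tendsto_const_nhds)
    · have : ∀ᶠ β in nhds β₀, f c k β x = g c k x := by
        filter_upwards [eventually_lt_nhds h] with β hβ
        simp [f, not_lt.mpr hβ.le]
      exact Filter.Tendsto.congr' (this.mono fun β hβ => hβ.symm)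
        (by simp only [f, not_lt.mpr h.le, if_false]; exact tendsto_const_nhds)

theorem stmt_7 (c k : ℝ) (hc : 0 ≤ c) (hk : 0 ≤ k)
    (μ : Measure ℝ) [IsProbabilityMeasure μ] [NullSingletonClass μ]
    (h1 : μ (Icc (0:ℝ) 1) = 1) :
    ContinuousOn (fun β => ∫ x, f c k β x ∂μ) (Icc (0:ℝ) 1) ∧
      ∃ βhat ∈ Icc (0:ℝ) 1, ∀ β ∈ Icc (0:ℝ) 1,
        (∫ x, f c k β x ∂μ) ≤ ∫ x, f c k βhat x ∂μ := by
  have hcont := continuous_integral_f c k μ h1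
  refine ⟨hcont.continuousOn, ?_⟩
  obtain ⟨βhat, hmem, hmax⟩ := isCompact_Icc.exists_isMaxOn
    (nonempty_Icc.mpr zero_le_one) hcont.continuousOn
  exact ⟨βhat, hmem, fun β hβ => hmax hβ⟩
end

section
/- Let m and t be finite index types, let A be a t × m real matrix and B a t × t real matrix. Suppose Bⁿ → 0 as n → ∞ and that the family (Bⁱ)_{i∈ℕ} is summable. Then the powers of the block matrix S = fromBlocks(I, 0, A, B) converge: Sⁿ → fromBlocks(I, 0, (∑'_{i∈ℕ} Bⁱ)·A, 0) as n → ∞. -/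
open Matrix Filter

lemma pow_fromBlocks_aux {m t : Type*} [Fintype m] [Fintype t] [DecidableEq m] [DecidableEq t]
    (A : Matrix t m ℝ) (B : Matrix t t ℝ) (n : ℕ) :
    (Matrix.fromBlocks (1 : Matrix m m ℝ) 0 A B) ^ n =
      Matrix.fromBlocks 1 0 ((∑ i ∈ Finset.range n, B ^ i) * A) (B ^ n) := by
  induction n with
  | zero => simp [Matrix.fromBlocks_one]
  | succ n ih =>
    rw [pow_succ, ih, Matrix.fromBlocks_multiply]
    rw [Finset.sum_range_succ, Matrix.add_mul, ← pow_succ]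
    simp

theorem stmt_10 (m t : Type*) [Fintype m] [Fintype t] [DecidableEq m] [DecidableEq t]
    (A : Matrix t m ℝ) (B : Matrix t t ℝ)
    (hB : Tendsto (fun n : ℕ => B ^ n) atTop (nhds 0))
    (hsum : Summable (fun i : ℕ => B ^ i)) :
    Tendsto (fun n : ℕ => (Matrix.fromBlocks (1 : Matrix m m ℝ) 0 A B) ^ n) atTop
      (nhds (Matrix.fromBlocks 1 0 ((∑' i : ℕ, B ^ i) * A) 0)) := by
  have key : (fun n : ℕ => (Matrix.fromBlocks (1 : Matrix m m ℝ) 0 A B) ^ n) =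
      fun n : ℕ => Matrix.fromBlocks 1 0 ((∑ i ∈ Finset.range n, B ^ i) * A) (B ^ n) :=
    funext fun n => pow_fromBlocks_aux A B n
  rw [key]
  have hXA : Tendsto (fun n : ℕ => (∑ i ∈ Finset.range n, B ^ i) * A) atTop
      (nhds ((∑' i : ℕ, B ^ i) * A)) := by
    have hm : Continuous (fun X : Matrix t t ℝ => X * A) :=
      continuous_id.matrix_mul continuous_const
    exact (hm.tendsto _).comp hsum.hasSum.tendsto_sum_nat
  have decomp : ∀ (X : Matrix t m ℝ) (Y : Matrix t t ℝ),
      Matrix.fromBlocks (1 : Matrix m m ℝ) 0 X Y =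
        Matrix.fromBlocks 1 0 0 0 + (Matrix.fromBlocks 0 0 X 0 + Matrix.fromBlocks 0 0 0 Y) := by
    intro X Y
    rw [Matrix.fromBlocks_add, Matrix.fromBlocks_add]
    simp
  have funeq : (fun n : ℕ => Matrix.fromBlocks (1 : Matrix m m ℝ) 0
      ((∑ i ∈ Finset.range n, B ^ i) * A) (B ^ n)) =
      fun n : ℕ => Matrix.fromBlocks 1 0 0 0 +
        (Matrix.fromBlocks 0 0 ((∑ i ∈ Finset.range n, B ^ i) * A) 0 +
          Matrix.fromBlocks 0 0 0 (B ^ n)) := funext fun n => decomp _ _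
  rw [funeq, decomp ((∑' i : ℕ, B ^ i) * A) 0]
  have c1 : Continuous (fun X : Matrix t m ℝ =>
      Matrix.fromBlocks (0 : Matrix m m ℝ) (0 : Matrix m t ℝ) X (0 : Matrix t t ℝ)) :=
    continuous_const.matrix_fromBlocks continuous_const continuous_id continuous_const
  have c2 : Continuous (fun Y : Matrix t t ℝ =>
      Matrix.fromBlocks (0 : Matrix m m ℝ) (0 : Matrix m t ℝ) (0 : Matrix t m ℝ) Y) :=
    continuous_const.matrix_fromBlocks continuous_const continuous_const continuous_id
  have h1 := (c1.tendsto _).comp hXA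
  have h2 := (c2.tendsto _).comp hB
  have h2' : Tendsto (fun n : ℕ => Matrix.fromBlocks (0 : Matrix m m ℝ) 0 0 (B ^ n)) atTop
      (nhds (Matrix.fromBlocks 0 0 0 0)) := h2
  exact tendsto_const_nhds.add (h1.add h2')
end

section
/- Let ι be a nonempty finite index type and let B be an ι × ι real matrix with nonnegative entries such that every row sum of B is at most 1 (B is substochastic). Suppose there exists k ≥ 1 such that every row sum of B^k is strictly less than 1. Then Bⁿ → 0 entrywise as n → ∞. -/
open Matrix Filter

lemma aux_pow_nonneg {ι : Type*} [Fintype ι] [DecidableEq ι]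
    (B : Matrix ι ι ℝ) (hnonneg : ∀ i j, 0 ≤ B i j) :
    ∀ n i j, 0 ≤ (B ^ n) i j := by
  intro n
  induction n with
  | zero => intro i j; simp [Matrix.one_apply]; positivity
  | succ n ih =>
    intro i j
    rw [pow_succ, Matrix.mul_apply]
    exact Finset.sum_nonneg fun l _ => mul_nonneg (ih i l) (hnonneg l j)

lemma aux_rowsum_mul {ι : Type*} [Fintype ι] [DecidableEq ι]
    (A C : Matrix ι ι ℝ) (hA : ∀ i j, 0 ≤ A i j)
    (a c : ℝ) (hc : 0 ≤ c)
    (hra : ∀ i, ∑ j, A i j ≤ a) (hrc : ∀ i, ∑ j, C i j ≤ c) :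
    ∀ i, ∑ j, (A * C) i j ≤ a * c := by
  intro i
  simp only [Matrix.mul_apply]
  rw [Finset.sum_comm]
  calc ∑ l, ∑ j, A i l * C l j = ∑ l, A i l * ∑ j, C l j := by
        simp [Finset.mul_sum]
    _ ≤ ∑ l, A i l * c :=
        Finset.sum_le_sum fun l _ => mul_le_mul_of_nonneg_left (hrc l) (hA i l)
    _ = (∑ l, A i l) * c := by rw [Finset.sum_mul]
    _ ≤ a * c := mul_le_mul_of_nonneg_right (hra i) hc

theorem stmt_11 (ι : Type*) [Fintype ι] [Nonempty ι] [DecidableEq ι]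
    (B : Matrix ι ι ℝ)
    (hnonneg : ∀ i j, 0 ≤ B i j)
    (hrow : ∀ i, ∑ j, B i j ≤ 1)
    (hk : ∃ k : ℕ, 1 ≤ k ∧ ∀ i, ∑ j, (B ^ k) i j < 1) :
    Tendsto (fun n : ℕ => B ^ n) atTop (nhds 0) := by
  obtain ⟨k, hk1, hklt⟩ := hk
  have hpn := aux_pow_nonneg B hnonneg
  -- c : max row sum of B^k
  set c : ℝ := Finset.univ.sup' Finset.univ_nonempty (fun i => ∑ j, (B ^ k) i j) with hc
  have hc0 : 0 ≤ c := by
    obtain ⟨i⟩ := ‹Nonempty ι›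
    exact le_trans (Finset.sum_nonneg fun j _ => hpn k i j)
      (Finset.le_sup' (f := fun i => ∑ j, (B ^ k) i j) (Finset.mem_univ i))
  have hc1 : c < 1 := by
    rw [hc, Finset.sup'_lt_iff]
    intro i _
    exact hklt i
  have hck : ∀ i, ∑ j, (B ^ k) i j ≤ c := fun i => Finset.le_sup' (f := fun i => ∑ j, (B ^ k) i j) (Finset.mem_univ i)
  -- row sums of B^n ≤ 1
  have hrow1 : ∀ n i, ∑ j, (B ^ n) i j ≤ 1 := by
    intro n
    induction n with
    | zero => intro i; simp [Matrix.one_apply, Finset.sum_ite_eq]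
    | succ n ih =>
      intro i
      have h := aux_rowsum_mul (B ^ n) B (hpn n) 1 1 zero_le_one ih hrow i
      rw [one_mul] at h
      rw [pow_succ]
      exact h
  -- row sums of B^(k*m) ≤ c^m
  have hkm : ∀ m i, ∑ j, (B ^ (k * m)) i j ≤ c ^ m := by
    intro m
    induction m with
    | zero => intro i; simp [Matrix.one_apply, Finset.sum_ite_eq]
    | succ m ih =>
      intro i
      have := aux_rowsum_mul (B ^ (k * m)) (B ^ k) (hpn _) (c ^ m) c hc0 ih hck i
      rw [← pow_add] at this
      rw [pow_succ]
      have heq : k * m + k = k * (m + 1) := by ring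
      rwa [heq] at this
  -- entry bound: (B^n) i j ≤ c^(n/k)
  have hbound : ∀ n i j, (B ^ n) i j ≤ c ^ (n / k) := by
    intro n i j
    have hsplit : k * (n / k) + n % k = n := Nat.div_add_mod n k
    have this : ∑ l, (B ^ (k * (n / k) + n % k)) i l ≤ c ^ (n / k) * 1 := by
      rw [pow_add]
      exact aux_rowsum_mul (B ^ (k * (n / k))) (B ^ (n % k)) (hpn _)
        (c ^ (n / k)) 1 zero_le_one (hkm _) (hrow1 _) i
    rw [hsplit, mul_one] at this
    calc (B ^ n) i j ≤ ∑ l, (B ^ n) i l :=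
          Finset.single_le_sum (fun l _ => hpn n i l) (Finset.mem_univ j)
      _ ≤ c ^ (n / k) := this
  -- squeeze entrywise
  rw [show (nhds (0 : Matrix ι ι ℝ)) = nhds (fun _ _ => 0) from rfl]
  show Tendsto (fun n : ℕ => fun i j => (B ^ n) i j) atTop (nhds (fun _ _ => (0 : ℝ)))
  rw [tendsto_pi_nhds]
  intro i
  rw [tendsto_pi_nhds]
  intro j
  have hdiv : Tendsto (fun n : ℕ => n / k) atTop atTop := by
    apply tendsto_atTop_atTop.mpr
    intro b
    refine ⟨k * b, fun n hn => ?_⟩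
    calc b = k * b / k := by rw [Nat.mul_div_cancel_left _ hk1]
      _ ≤ n / k := Nat.div_le_div_right hn
  have hcpow : Tendsto (fun n : ℕ => c ^ (n / k)) atTop (nhds 0) :=
    (tendsto_pow_atTop_nhds_zero_of_lt_one hc0 hc1).comp hdiv
  exact squeeze_zero (fun n => hpn n i j) (fun n => hbound n i j) hcpow
end

section
/- Let m and t be finite index types, let A be a t × m real matrix and B a t × t real matrix, both with nonnegative entries, such that for every row i one has ∑_j A i j + ∑_j B i j = 1 (the combined matrix is row-stochastic). Suppose Bⁿ → 0 as n → ∞ and the family (Bⁱ)_{i∈ℕ} is summable. Then every row of the matrix (∑'_{i∈ℕ} Bⁱ)·A sums to 1; that is, absorption occurs with probability 1 from every transient state. -/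
open Matrix Filter

theorem stmt_12 (m t : Type*) [Fintype m] [Fintype t] [DecidableEq m] [DecidableEq t]
    (A : Matrix t m ℝ) (B : Matrix t t ℝ)
    (hAnonneg : ∀ i j, 0 ≤ A i j) (hBnonneg : ∀ i j, 0 ≤ B i j)
    (hrow : ∀ i, (∑ j, A i j) + (∑ j, B i j) = 1)
    (hB : Tendsto (fun n : ℕ => B ^ n) atTop (nhds 0))
    (hsum : Summable (fun i : ℕ => B ^ i)) :
    ∀ i, ∑ j, ((∑' n : ℕ, B ^ n) * A) i j = 1 := by
  set N : Matrix t t ℝ := ∑' n : ℕ, B ^ n with hN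
  have h1 : N * B = ∑' n : ℕ, B ^ (n + 1) := by
    rw [← hsum.tsum_mul_right B]
    simp [pow_succ]
  have h2 : N = 1 + N * B := by
    rw [h1]
    calc N = B ^ 0 + ∑' n : ℕ, B ^ (n + 1) := Summable.tsum_eq_zero_add hsum
    _ = 1 + ∑' n : ℕ, B ^ (n + 1) := by rw [pow_zero]
  intro i
  have key : ∀ j, (N * B) i j = N i j - (1 : Matrix t t ℝ) i j := by
    intro j
    have := congrArg (fun M : Matrix t t ℝ => M i j) h2
    simp only [Matrix.add_apply] at this
    linarith
  calc ∑ j, (N * A) i j = ∑ j, ∑ k, N i k * A k j := by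
        simp [Matrix.mul_apply]
    _ = ∑ k, N i k * ∑ j, A k j := by
        rw [Finset.sum_comm]; simp [Finset.mul_sum]
    _ = ∑ k, N i k * (1 - ∑ j, B k j) := by
        refine Finset.sum_congr rfl fun k _ => ?_
        have := hrow k; rw [show (∑ j, A k j) = 1 - ∑ j, B k j by linarith]
    _ = ∑ k, N i k - ∑ k, ∑ j, N i k * B k j := by
        simp [mul_sub, Finset.sum_sub_distrib, Finset.mul_sum]
    _ = ∑ k, N i k - ∑ j, (N * B) i j := by
        rw [Finset.sum_comm]; simp [Matrix.mul_apply]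
    _ = 1 := by
        simp only [key, Finset.sum_sub_distrib]
        simp [Matrix.one_apply]
end
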